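/- arXiv:1911.01423 — 7 statements merged into one kernel-verified Lean document; each statement's English description precedes it below -/
import Mathlib

section
/- For real numbers a > b > 0 and every nonnegative integer n, the integral from 0 to 1 of x^n (1-x)^n / ((x+a)(x+b))^(n+1) dx equals the integral from 0 to 1 of x^n (1-x)^n / ((a-b)x + (a+1)b)^(n+1) dx. -/
/-!
The substitution `x = b (1 - u) / (u + b)` maps `[0, 1]` onto itself, exchanging the endpoints,
with `dx = -t du` for `t = b (b + 1) / (u + b)²`. It turns `x (1 - x)` into `t u (1 - u)` and
`(x + a)(x + b)` into `t ((a - b) u + (a + 1) b)`, so the powers of `t` in the first integrand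
cancel against the Jacobian and leave exactly the second integrand.
-/

open Set intervalIntegral

noncomputable section

def mobiusFlip (b u : ℝ) : ℝ := b * (1 - u) / (u + b)

variable {b : ℝ}

lemma hasDerivAt_mobiusFlip {u : ℝ} (hu : u + b ≠ 0) :
    HasDerivAt (mobiusFlip b) (-(b * (b + 1)) / (u + b) ^ 2) u := by
  have hnum : HasDerivAt (fun u => b * (1 - u)) (-b) u := by
    simpa using ((hasDerivAt_id u).const_sub 1).const_mul b
  have hden : HasDerivAt (fun u => u + b) 1 u := (hasDerivAt_id' u).add_const b
  exact (hnum.div hden hu).congr_deriv (by ring)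

lemma mapsTo_mobiusFlip (hb : 0 < b) : MapsTo (mobiusFlip b) (Icc 0 1) (Icc 0 1) := by
  rintro u ⟨hu0, hu1⟩
  have hub : 0 < u + b := by linarith
  exact ⟨div_nonneg (by nlinarith) hub.le, (div_le_one hub).2 (by nlinarith)⟩

theorem integral_comp_mobiusFlip (hb : 0 < b) {g : ℝ → ℝ} (hg : ContinuousOn g (Icc 0 1)) :
    ∫ u in (0:ℝ)..1, g (mobiusFlip b u) * (b * (b + 1) / (u + b) ^ 2) = ∫ x in (0:ℝ)..1, g x := by
  have hpos : ∀ u ∈ uIcc (0:ℝ) 1, 0 < u + b := fun u hu => by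
    rw [uIcc_of_le zero_le_one] at hu
    linarith [hu.1]
  have hsubst := integral_comp_mul_deriv' (g := g)
    (fun u hu => hasDerivAt_mobiusFlip (hpos u hu).ne')
    (continuousOn_const.div (by fun_prop) fun u hu => (pow_pos (hpos u hu) 2).ne')
    (hg.mono (by rw [uIcc_of_le zero_le_one]; exact (mapsTo_mobiusFlip hb).image_subset))
  have h0 : mobiusFlip b 0 = 1 := by simp [mobiusFlip, hb.ne']
  have h1 : mobiusFlip b 1 = 0 := by simp [mobiusFlip]
  rw [h0, h1, integral_symm 0 1] at hsubst
  simpa only [Function.comp, neg_div, mul_neg, integral_neg, neg_inj] using hsubst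

lemma integrand_comp_mobiusFlip {a u : ℝ} (n : ℕ) (hub : u + b ≠ 0) (hb : b ≠ 0)
    (hb1 : b + 1 ≠ 0) :
    (mobiusFlip b u) ^ n * (1 - mobiusFlip b u) ^ n
        / ((mobiusFlip b u + a) * (mobiusFlip b u + b)) ^ (n + 1) * (b * (b + 1) / (u + b) ^ 2)
      = u ^ n * (1 - u) ^ n / ((a - b) * u + (a + 1) * b) ^ (n + 1) := by
  set t := b * (b + 1) / (u + b) ^ 2
  have ht : t ≠ 0 := by positivity
  have hnum : mobiusFlip b u * (1 - mobiusFlip b u) = t * (u * (1 - u)) := by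
    unfold t mobiusFlip; field_simp; ring
  have hden : (mobiusFlip b u + a) * (mobiusFlip b u + b) = ((a - b) * u + (a + 1) * b) * t := by
    unfold t mobiusFlip; field_simp; ring
  rw [← mul_pow, hnum, hden, mul_pow, mul_pow, mul_pow, pow_succ t]
  field_simp

theorem stmt0 (a b : ℝ) (hb : 0 < b) (hab : b < a) (n : ℕ) :
    ∫ x in (0:ℝ)..1, x ^ n * (1 - x) ^ n / ((x + a) * (x + b)) ^ (n + 1)
      = ∫ x in (0:ℝ)..1, x ^ n * (1 - x) ^ n / ((a - b) * x + (a + 1) * b) ^ (n + 1) := by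
  have hcont : ContinuousOn (fun x : ℝ => x ^ n * (1 - x) ^ n / ((x + a) * (x + b)) ^ (n + 1))
      (Icc 0 1) :=
    ContinuousOn.div (by fun_prop) (by fun_prop) fun x hx =>
      pow_ne_zero _ (mul_pos (by linarith [hx.1]) (by linarith [hx.1])).ne'
  rw [← integral_comp_mobiusFlip hb hcont]
  refine integral_congr fun u hu => ?_
  rw [uIcc_of_le zero_le_one] at hu
  exact integrand_comp_mobiusFlip n (by linarith [hu.1]) hb.ne' (by linarith)

end
end

section
/- For real a > b > 0, the integral from 0 to 1 of x(1-x) / ((x+a)(x+b))^2 dx equals the integral from 0 to 1 of x(1-x) / ((a-b)x + (a+1)b)^2 dx. -/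
/-!
The substitution `x = b (1 - t) / (t + b)` is a Möbius involution of `[0, 1]` exchanging the
endpoints. Under it `x + a`, `x + b`, `x` and `1 - x` all become linear in `t` divided by
`t + b`, namely `((a - b) t + (a + 1) b)`, `b (1 + b)`, `b (1 - t)` and `(1 + b) t`, and the
Jacobian `b (1 + b) / (t + b) ^ 2` cancels every power of `t + b`.
-/

open Set intervalIntegral

noncomputable section

def mobiusInvolution (b t : ℝ) : ℝ := b * (1 - t) / (t + b)

lemma mobiusInvolution_zero {b : ℝ} (hb : b ≠ 0) : mobiusInvolution b 0 = 1 := by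
  simp [mobiusInvolution, hb]

lemma mobiusInvolution_one (b : ℝ) : mobiusInvolution b 1 = 0 := by
  simp [mobiusInvolution]

lemma hasDerivAt_mobiusInvolution {b t : ℝ} (ht : t + b ≠ 0) :
    HasDerivAt (mobiusInvolution b) (-(b * (1 + b) / (t + b) ^ 2)) t := by
  have h : HasDerivAt (fun t => b * (1 - t) / (t + b))
      ((b * -1 * (t + b) - b * (1 - t) * 1) / (t + b) ^ 2) t :=
    (((hasDerivAt_id' t).const_sub 1).const_mul b).div ((hasDerivAt_id' t).add_const b) ht
  exact h.congr_deriv (by ring)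

lemma mapsTo_mobiusInvolution {b : ℝ} (hb : 0 < b) :
    MapsTo (mobiusInvolution b) (Icc 0 1) (Icc 0 1) := by
  rintro t ⟨ht0, ht1⟩
  have htb : 0 < t + b := by linarith
  exact ⟨div_nonneg (by nlinarith) htb.le, (div_le_one htb).2 (by nlinarith)⟩

theorem integral_comp_mobiusInvolution {b : ℝ} (hb : 0 < b) {g : ℝ → ℝ}
    (hg : ContinuousOn g (Icc 0 1)) :
    ∫ x in (0 : ℝ)..1, g x
      = ∫ t in (0 : ℝ)..1, b * (1 + b) / (t + b) ^ 2 * g (mobiusInvolution b t) := by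
  have hIcc : uIcc (0 : ℝ) 1 = Icc 0 1 := uIcc_of_le zero_le_one
  have htb : ∀ t ∈ uIcc (0 : ℝ) 1, t + b ≠ 0 := by
    intro t ht
    rw [hIcc] at ht
    linarith [ht.1]
  have hderiv : ContinuousOn (fun t => -(b * (1 + b) / (t + b) ^ 2)) (uIcc 0 1) :=
    (continuousOn_const.div (by fun_prop) fun t ht => pow_ne_zero 2 (htb t ht)).neg
  have hcomp := integral_comp_mul_deriv' (fun t ht => hasDerivAt_mobiusInvolution (htb t ht))
    hderiv (hg.mono (by rw [hIcc]; exact (mapsTo_mobiusInvolution hb).image_subset))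
  rw [mobiusInvolution_zero hb.ne', mobiusInvolution_one] at hcomp
  rw [integral_symm, ← hcomp, ← intervalIntegral.integral_neg]
  refine integral_congr fun t _ => ?_
  simp only [Function.comp_apply]
  ring

lemma jacobian_mul_integrand_comp_mobiusInvolution {a b t : ℝ} (hb : b ≠ 0) (hb1 : 1 + b ≠ 0)
    (htb : t + b ≠ 0) :
    b * (1 + b) / (t + b) ^ 2 * (mobiusInvolution b t * (1 - mobiusInvolution b t) /
        ((mobiusInvolution b t + a) * (mobiusInvolution b t + b)) ^ 2)
      = t * (1 - t) / ((a - b) * t + (a + 1) * b) ^ 2 := by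
  have hxa : mobiusInvolution b t + a = ((a - b) * t + (a + 1) * b) / (t + b) := by
    unfold mobiusInvolution; field_simp; ring
  have hxb : mobiusInvolution b t + b = b * (1 + b) / (t + b) := by
    unfold mobiusInvolution; field_simp; ring
  have h1x : 1 - mobiusInvolution b t = (1 + b) * t / (t + b) := by
    unfold mobiusInvolution; field_simp; ring
  rw [hxa, hxb, h1x, mobiusInvolution]
  field_simp

theorem stmt2 (a b : ℝ) (hb : 0 < b) (hab : b < a) :
    ∫ x in (0:ℝ)..1, x * (1 - x) / ((x + a) * (x + b)) ^ 2
      = ∫ x in (0:ℝ)..1, x * (1 - x) / ((a - b) * x + (a + 1) * b) ^ 2 := by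
  have ha : 0 < a := hb.trans hab
  have hg : ContinuousOn (fun x : ℝ => x * (1 - x) / ((x + a) * (x + b)) ^ 2) (Icc 0 1) :=
    ContinuousOn.div (by fun_prop) (by fun_prop) fun x hx => by
      have := hx.1
      positivity
  rw [integral_comp_mobiusInvolution hb hg]
  refine integral_congr fun t ht => ?_
  rw [uIcc_of_le zero_le_one] at ht
  exact jacobian_mul_integrand_comp_mobiusInvolution hb.ne' (by linarith) (by linarith [ht.1])

end
end

section
/- Fix real a > b > 0 and let F(n,x) = x^n (1-x)^n / ((x+a)(x+b))^(n+1), and R1(x) = x(x-1)((a+b+1)x^2 + 2abx - ab) / ((x+b)(x+a)). Then for every nonnegative integer n and every x in [0,1], (n+1)F(n,x) - (2n+3)(2ab+a+b)F(n+1,x) + (a-b)^2 (n+2) F(n+2,x) equals the derivative with respect to x of R1(x)F(n,x). -/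
/-!
With `u = x (1 - x)`, `p = (x + a) (x + b)` and `q = (a + b + 1) x² + 2abx - ab`, the product
`R1 · F(n, ·)` is the single rational function `-u^(n+1) q / p^(n+2)`, and
`F(n + k, x) = u^n u^k p^(2 - k) / p^(n+3)`. Over the common denominator `p^(n+3)` the claim
reduces to a polynomial identity that is affine in `n`; its two coefficients are the
Wronskian-type identities `q p' - q' p = (a - b)² u - (2ab + a + b) p` and
`q (u p' - u' p) = p² - 2 (2ab + a + b) u p + (a - b)² u²`.
-/

section Algebra

variable {R : Type*} [CommRing R]

def shiftProd (a b x : R) : R := (x + a) * (x + b)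

def r1Quad (a b x : R) : R := (a + b + 1) * x ^ 2 + 2 * a * b * x - a * b

theorem wronskian_r1Quad_shiftProd (a b x : R) :
    r1Quad a b x * (2 * x + a + b) - (2 * (a + b + 1) * x + 2 * a * b) * shiftProd a b x
      = (a - b) ^ 2 * (x * (1 - x)) - (2 * a * b + a + b) * shiftProd a b x := by
  unfold r1Quad shiftProd
  ring

theorem r1Quad_mul_wronskian_shiftProd (a b x : R) :
    r1Quad a b x * (x * (1 - x) * (2 * x + a + b) - (1 - 2 * x) * shiftProd a b x)
      = shiftProd a b x ^ 2 - 2 * (2 * a * b + a + b) * (x * (1 - x)) * shiftProd a b x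
        + (a - b) ^ 2 * (x * (1 - x)) ^ 2 := by
  unfold r1Quad shiftProd
  ring

def recurrenceNumerator (a b x : R) (n : ℕ) : R :=
  (n + 1) * shiftProd a b x ^ 2
    - (2 * n + 3) * (2 * a * b + a + b) * (x * (1 - x)) * shiftProd a b x
    + (a - b) ^ 2 * (n + 2) * (x * (1 - x)) ^ 2

theorem recurrenceNumerator_eq_quotientRule (a b x : R) (n : ℕ) :
    recurrenceNumerator a b x n
      = (n + 2) * (x * (1 - x)) * r1Quad a b x * (2 * x + a + b)
        - ((n + 1) * (1 - 2 * x) * r1Quad a b x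
          + x * (1 - x) * (2 * (a + b + 1) * x + 2 * a * b)) * shiftProd a b x := by
  unfold recurrenceNumerator
  linear_combination (-(x * (1 - x))) * wronskian_r1Quad_shiftProd a b x
    - (n + 1 : R) * r1Quad_mul_wronskian_shiftProd a b x

end Algebra

section Field

variable {𝕜 : Type*} [Field 𝕜]

theorem r1_mul_F_eq (a b x : 𝕜) (n : ℕ) :
    x * (x - 1) * ((a + b + 1) * x ^ 2 + 2 * a * b * x - a * b) / ((x + b) * (x + a))
        * (x ^ n * (1 - x) ^ n / ((x + a) * (x + b)) ^ (n + 1))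
      = -(x ^ (n + 1) * (1 - x) ^ (n + 1) * r1Quad a b x / shiftProd a b x ^ (n + 2)) := by
  rw [div_mul_div_comm, ← neg_div, shiftProd, r1Quad]
  congr 1 <;> ring

theorem recurrence_combination_eq {a b x : 𝕜} (hp : shiftProd a b x ≠ 0) (n : ℕ) :
    (n + 1) * (x ^ n * (1 - x) ^ n / shiftProd a b x ^ (n + 1))
        - (2 * n + 3) * (2 * a * b + a + b)
          * (x ^ (n + 1) * (1 - x) ^ (n + 1) / shiftProd a b x ^ (n + 1 + 1))
        + (a - b) ^ 2 * (n + 2) * (x ^ (n + 2) * (1 - x) ^ (n + 2) / shiftProd a b x ^ (n + 2 + 1))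
      = x ^ n * (1 - x) ^ n * recurrenceNumerator a b x n / shiftProd a b x ^ (n + 3) := by
  unfold recurrenceNumerator
  field_simp
  ring

end Field

section Calculus

variable {𝕜 : Type*} [NontriviallyNormedField 𝕜]

theorem r1Quad_hasDerivAt (a b x : 𝕜) :
    HasDerivAt (r1Quad a b) (2 * (a + b + 1) * x + 2 * a * b) x :=
  ((((hasDerivAt_pow 2 x).const_mul (a + b + 1)).add
    ((hasDerivAt_id x).const_mul (2 * a * b))).sub_const (a * b)).congr_deriv (by ring)

theorem shiftProd_hasDerivAt (a b x : 𝕜) : HasDerivAt (shiftProd a b) (2 * x + a + b) x :=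
  (((hasDerivAt_id x).add_const a).mul ((hasDerivAt_id x).add_const b)).congr_deriv
    (by simp only [id]; ring)

theorem pow_mul_one_sub_pow_hasDerivAt (n : ℕ) (x : 𝕜) :
    HasDerivAt (fun y => y ^ (n + 1) * (1 - y) ^ (n + 1))
      ((n + 1) * (x ^ n * (1 - x) ^ n) * (1 - 2 * x)) x :=
  ((hasDerivAt_pow (n + 1) x).fun_mul (((hasDerivAt_id x).const_sub 1).fun_pow (n + 1))).congr_deriv
    (by simp only [id, Nat.add_sub_cancel]; push_cast; ring)

theorem hasDerivAt_pow_mul_r1Quad_div {a b x : 𝕜} (hp : shiftProd a b x ≠ 0) (n : ℕ) :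
    HasDerivAt (fun y => y ^ (n + 1) * (1 - y) ^ (n + 1) * r1Quad a b y / shiftProd a b y ^ (n + 2))
      (-(x ^ n * (1 - x) ^ n * recurrenceNumerator a b x n / shiftProd a b x ^ (n + 3))) x := by
  refine (((pow_mul_one_sub_pow_hasDerivAt n x).fun_mul (r1Quad_hasDerivAt a b x)).fun_div
    ((shiftProd_hasDerivAt a b x).fun_pow (n + 2)) (pow_ne_zero _ hp)).congr_deriv ?_
  rw [recurrenceNumerator_eq_quotientRule, show n + 2 - 1 = n + 1 by omega]
  push_cast
  field_simp
  ring

end Calculus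

theorem stmt3 (a b : ℝ) (hb : 0 < b) (hab : b < a)
    (F : ℕ → ℝ → ℝ)
    (hF : ∀ n x, F n x = x ^ n * (1 - x) ^ n / ((x + a) * (x + b)) ^ (n + 1))
    (R1 : ℝ → ℝ)
    (hR1 : ∀ x, R1 x = x * (x - 1) * ((a + b + 1) * x ^ 2 + 2 * a * b * x - a * b)
        / ((x + b) * (x + a)))
    (n : ℕ) (x : ℝ) (hx : x ∈ Set.Icc (0:ℝ) 1) :
    HasDerivAt (fun y => R1 y * F n y)
      ((n + 1) * F n x - (2 * n + 3) * (2 * a * b + a + b) * F (n + 1) x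
        + (a - b) ^ 2 * (n + 2) * F (n + 2) x) x := by
  obtain ⟨hx0, -⟩ := hx
  have hp : shiftProd a b x ≠ 0 := (mul_pos (by linarith) (by linarith)).ne'
  have hRF : (fun y => R1 y * F n y)
      = fun y => -(y ^ (n + 1) * (1 - y) ^ (n + 1) * r1Quad a b y / shiftProd a b y ^ (n + 2)) :=
    funext fun y => by rw [hR1, hF, r1_mul_F_eq]
  rw [hRF, hF, hF, hF]
  refine (hasDerivAt_pow_mul_r1Quad_div hp n).neg.congr_deriv ?_
  rw [neg_neg, ← recurrence_combination_eq hp]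
  rfl
end

section
/- For real a > b > 0 and nonnegative integer n, let L(n) = integral from 0 to 1 of x^n (1-x)^n / ((x+a)(x+b))^(n+1) dx. Then (n+1)L(n) - (2n+3)(2ab+a+b)L(n+1) + (a-b)^2 (n+2) L(n+2) = 0. -/
/-!
With `P x = (x + a) * (x + b)` and `Q x = a * b - 2 * a * b * x - (1 + a + b) * x ^ 2`, the function
`x ^ (n + 1) * (1 - x) ^ (n + 1) * Q x / P x ^ (n + 2)` is a primitive of the integrand of the
recurrence, i.e. of `(n + 1) f_n - (2n + 3)(2ab + a + b) f_{n+1} + (a - b)² (n + 2) f_{n+2}`.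
It vanishes at both ends of `[0, 1]`, so the integral of the recurrence is zero.
-/

open intervalIntegral

noncomputable section

namespace RecurrenceIntegral

variable (a b : ℝ) (n : ℕ)

def integrand (x : ℝ) : ℝ :=
  x ^ n * (1 - x) ^ n / ((x + a) * (x + b)) ^ (n + 1)

def primitive (x : ℝ) : ℝ :=
  x ^ (n + 1) * (1 - x) ^ (n + 1) * (a * b - 2 * a * b * x - (1 + a + b) * x ^ 2) /
    ((x + a) * (x + b)) ^ (n + 2)

def recurrence (x : ℝ) : ℝ :=
  (n + 1) * integrand a b n x - (2 * n + 3) * (2 * a * b + a + b) * integrand a b (n + 1) x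
    + (a - b) ^ 2 * (n + 2) * integrand a b (n + 2) x

@[simp] lemma primitive_zero : primitive a b n 0 = 0 := by simp [primitive]

@[simp] lemma primitive_one : primitive a b n 1 = 0 := by simp [primitive]

lemma hasDerivAt_primitive {x : ℝ} (hx : (x + a) * (x + b) ≠ 0) :
    HasDerivAt (primitive a b n) (recurrence a b n x) x := by
  have hnum := ((hasDerivAt_pow (n + 1) x).fun_mul
    (((hasDerivAt_id x).const_sub 1).fun_pow (n + 1))).fun_mul
    (((hasDerivAt_const x (a * b)).sub ((hasDerivAt_id x).const_mul (2 * a * b))).sub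
      ((hasDerivAt_pow 2 x).const_mul (1 + a + b)))
  have hden := (((hasDerivAt_id x).add_const a).fun_mul
    ((hasDerivAt_id x).add_const b)).fun_pow (n + 2)
  refine (hnum.fun_div hden (pow_ne_zero _ hx)).congr_deriv ?_
  simp only [recurrence, integrand, id, Pi.sub_apply, Nat.add_sub_cancel, Nat.add_succ_sub_one,
    pow_add, pow_one, Nat.cast_add, Nat.cast_one, Nat.cast_ofNat]
  have hPn : ((x + a) * (x + b)) ^ n ≠ 0 := pow_ne_zero _ hx
  generalize ((x + a) * (x + b)) ^ n = P at hPn ⊢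
  generalize x ^ n = X
  generalize (1 - x) ^ n = Y
  field_simp
  ring

lemma intervalIntegrable_integrand {s t : ℝ}
    (h : ∀ x ∈ Set.uIcc s t, (x + a) * (x + b) ≠ 0) :
    IntervalIntegrable (integrand a b n) MeasureTheory.volume s t :=
  (ContinuousOn.div (by fun_prop) (by fun_prop) fun x hx =>
    pow_ne_zero _ (h x hx)).intervalIntegrable

lemma integral_recurrence (h : ∀ x ∈ Set.uIcc (0 : ℝ) 1, (x + a) * (x + b) ≠ 0) :
    (n + 1) * (∫ x in (0 : ℝ)..1, integrand a b n x)
      - (2 * n + 3) * (2 * a * b + a + b) * (∫ x in (0 : ℝ)..1, integrand a b (n + 1) x)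
      + (a - b) ^ 2 * (n + 2) * (∫ x in (0 : ℝ)..1, integrand a b (n + 2) x) = 0 := by
  have hf (m : ℕ) := intervalIntegrable_integrand a b m h
  have hf₀ := (hf n).const_mul (n + 1 : ℝ)
  have hf₁ := (hf (n + 1)).const_mul ((2 * n + 3) * (2 * a * b + a + b))
  have hf₂ := (hf (n + 2)).const_mul ((a - b) ^ 2 * (n + 2))
  have key : ∫ x in (0 : ℝ)..1, recurrence a b n x = 0 := by
    rw [integral_eq_sub_of_hasDerivAt (fun x hx => hasDerivAt_primitive a b n (h x hx))
      ((hf₀.sub hf₁).add hf₂), primitive_one, primitive_zero, sub_zero]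
  simp only [recurrence] at key
  rwa [integral_add (hf₀.sub hf₁) hf₂, integral_sub hf₀ hf₁, integral_const_mul,
    integral_const_mul, integral_const_mul] at key

end RecurrenceIntegral

end

theorem stmt5 (a b : ℝ) (hb : 0 < b) (hab : b < a)
    (L : ℕ → ℝ)
    (hL : ∀ n, L n = ∫ x in (0:ℝ)..1, x ^ n * (1 - x) ^ n / ((x + a) * (x + b)) ^ (n + 1))
    (n : ℕ) :
    (n + 1) * L n - (2 * n + 3) * (2 * a * b + a + b) * L (n + 1)
      + (a - b) ^ 2 * (n + 2) * L (n + 2) = 0 := by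
  have hP : ∀ x ∈ Set.uIcc (0 : ℝ) 1, (x + a) * (x + b) ≠ 0 := by
    intro x hx
    rw [Set.uIcc_of_le zero_le_one] at hx
    have : 0 < x + b := by linarith [hx.1]
    have : 0 < x + a := by linarith [hx.1]
    positivity
  rw [hL, hL, hL]
  exact RecurrenceIntegral.integral_recurrence a b n hP
end

section
/- For real a > b > 0 and nonnegative integer n, let R(n) = integral from 0 to 1 of x^n (1-x)^n / ((a-b)x + (a+1)b)^(n+1) dx. Then (n+1)R(n) - (2n+3)(2ab+a+b)R(n+1) + (a-b)^2 (n+2) R(n+2) = 0. -/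
/-!
With `D x = p * x + q`, the combination `(n+1) K_n - (2n+3)(p+2q) K_{n+1} + p² (n+2) K_{n+2}` of
the integrands `K_m x = x^m (1-x)^m / D x^(m+1)` is the derivative of
`x^(n+1) (1-x)^(n+1) (q (1 - 2x) - p x²) / D x^(n+2)`, which vanishes at `0` and `1`.
The theorem is the case `p = a - b`, `q = (a + 1) b`, where `p + 2q = 2ab + a + b`.
-/

open intervalIntegral

noncomputable def betaKernel (p q : ℝ) (m : ℕ) (x : ℝ) : ℝ :=
  x ^ m * (1 - x) ^ m / (p * x + q) ^ (m + 1)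

section BetaKernel

variable {p q : ℝ}

theorem hasDerivAt_betaKernel_recurrence (n : ℕ) {x : ℝ} (hx : p * x + q ≠ 0) :
    HasDerivAt
      (fun x => x ^ (n + 1) * (1 - x) ^ (n + 1) * (q * (1 - 2 * x) - p * x ^ 2) /
        (p * x + q) ^ (n + 2))
      ((n + 1) * betaKernel p q n x - (2 * n + 3) * (p + 2 * q) * betaKernel p q (n + 1) x
        + p ^ 2 * (n + 2) * betaKernel p q (n + 2) x) x := by
  have hpow : HasDerivAt (fun x : ℝ => x ^ (n + 1)) ((n + 1 : ℕ) * x ^ n) x :=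
    hasDerivAt_pow (n + 1) x
  have hsub : HasDerivAt (fun x : ℝ => (1 - x) ^ (n + 1)) ((n + 1 : ℕ) * (1 - x) ^ n * -1) x :=
    ((hasDerivAt_id x).const_sub 1).fun_pow (n + 1)
  have hquad : HasDerivAt (fun x : ℝ => q * (1 - 2 * x) - p * x ^ 2)
      (q * -(2 * 1) - p * ((2 : ℕ) * x ^ 1)) x :=
    ((((hasDerivAt_id x).const_mul 2).const_sub 1).const_mul q).sub
      ((hasDerivAt_pow 2 x).const_mul p)
  have hden : HasDerivAt (fun x : ℝ => (p * x + q) ^ (n + 2))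
      ((n + 2 : ℕ) * (p * x + q) ^ (n + 1) * (p * 1)) x :=
    (((hasDerivAt_id x).const_mul p).add_const q).fun_pow (n + 2)
  refine (((hpow.fun_mul hsub).fun_mul hquad).fun_div hden (pow_ne_zero _ hx)).congr_deriv ?_
  simp only [betaKernel, pow_succ]
  field_simp
  push_cast
  ring

theorem intervalIntegrable_betaKernel (hD : ∀ x ∈ Set.uIcc (0 : ℝ) 1, p * x + q ≠ 0) (m : ℕ) :
    IntervalIntegrable (betaKernel p q m) MeasureTheory.volume 0 1 :=
  (ContinuousOn.div (by fun_prop) (by fun_prop)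
    fun x hx => pow_ne_zero _ (hD x hx)).intervalIntegrable

theorem integral_betaKernel_recurrence (hD : ∀ x ∈ Set.uIcc (0 : ℝ) 1, p * x + q ≠ 0) (n : ℕ) :
    (n + 1) * (∫ x in (0 : ℝ)..1, betaKernel p q n x)
      - (2 * n + 3) * (p + 2 * q) * (∫ x in (0 : ℝ)..1, betaKernel p q (n + 1) x)
      + p ^ 2 * (n + 2) * (∫ x in (0 : ℝ)..1, betaKernel p q (n + 2) x) = 0 := by
  have hK := intervalIntegrable_betaKernel hD
  rw [← integral_const_mul, ← integral_const_mul, ← integral_const_mul,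
    ← integral_sub ((hK n).const_mul _) ((hK (n + 1)).const_mul _),
    ← integral_add (((hK n).const_mul _).sub ((hK (n + 1)).const_mul _)) ((hK (n + 2)).const_mul _),
    integral_eq_sub_of_hasDerivAt (fun x hx => hasDerivAt_betaKernel_recurrence n (hD x hx))
      ((((hK n).const_mul _).sub ((hK (n + 1)).const_mul _)).add ((hK (n + 2)).const_mul _))]
  simp

end BetaKernel

theorem stmt6 (a b : ℝ) (hb : 0 < b) (hab : b < a)
    (R : ℕ → ℝ)
    (hR : ∀ n, R n = ∫ x in (0:ℝ)..1,
        x ^ n * (1 - x) ^ n / ((a - b) * x + (a + 1) * b) ^ (n + 1))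
    (n : ℕ) :
    (n + 1) * R n - (2 * n + 3) * (2 * a * b + a + b) * R (n + 1)
      + (a - b) ^ 2 * (n + 2) * R (n + 2) = 0 := by
  have hD : ∀ x ∈ Set.uIcc (0 : ℝ) 1, (a - b) * x + (a + 1) * b ≠ 0 := by
    intro x hx
    rw [Set.uIcc_of_le zero_le_one] at hx
    nlinarith [hx.1]
  have hcoeff : 2 * a * b + a + b = (a - b) + 2 * ((a + 1) * b) := by ring
  simpa only [hR, hcoeff, betaKernel] using integral_betaKernel_recurrence hD n
end

section
/- For real a > b > 0, the map x ↦ b(1-x)/(b+x) is a differentiable bijection from [0,1] to [0,1] (reversing orientation), and substituting u = b(1-x)/(b+x) transforms the integrand x^n(1-x)^n/((x+a)(x+b))^(n+1) dx into u^n(1-u)^n/((a-b)u + (a+1)b)^(n+1) du, establishing that the integral from 0 to 1 of x^n (1-x)^n / ((x+a)(x+b))^(n+1) dx equals the integral from 0 to 1 of u^n (1-u)^n / ((a-b)u + (a+1)b)^(n+1) du. -/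
/-!
With `f x = b (1 - x) / (b + x)` one has `b + f x = b (b + 1) / (b + x)` and
`1 - f x = x (b + 1) / (b + x)`, so `f` is an involution of `[0, 1]` exchanging `0` and `1`, with
`f' x = -b (b + 1) / (b + x) ^ 2`. Moreover `(a - b) f x + (a + 1) b = b (b + 1) (x + a) / (b + x)`,
and with these three formulas the substituted integrand times `|f'|` collapses to the original one;
the integral identity is then the change of variables `u = f x`.
-/

open Set intervalIntegral

noncomputable def mobiusSwap (b x : ℝ) : ℝ := b * (1 - x) / (b + x)

section

variable {b x : ℝ}

lemma mobiusSwap_zero (hb : b ≠ 0) : mobiusSwap b 0 = 1 := by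
  simp [mobiusSwap, hb]

lemma mobiusSwap_one : mobiusSwap b 1 = 0 := by
  simp [mobiusSwap]

lemma add_mobiusSwap (hbx : b + x ≠ 0) : b + mobiusSwap b x = b * (b + 1) / (b + x) := by
  rw [mobiusSwap]; field_simp; ring

lemma one_sub_mobiusSwap (hbx : b + x ≠ 0) : 1 - mobiusSwap b x = x * (b + 1) / (b + x) := by
  rw [mobiusSwap]; field_simp; ring

lemma mobiusSwap_mobiusSwap (hb : b ≠ 0) (hb1 : b + 1 ≠ 0) (hbx : b + x ≠ 0) :
    mobiusSwap b (mobiusSwap b x) = x := by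
  rw [mobiusSwap, add_mobiusSwap hbx, one_sub_mobiusSwap hbx]
  field_simp

lemma mapsTo_mobiusSwap_Icc (hb : 0 < b) : MapsTo (mobiusSwap b) (Icc 0 1) (Icc 0 1) := by
  rintro x ⟨hx0, hx1⟩
  have hbx : 0 < b + x := by linarith
  refine ⟨div_nonneg (by nlinarith) hbx.le, ?_⟩
  rw [mobiusSwap, div_le_one hbx]
  nlinarith

lemma bijOn_mobiusSwap_Icc (hb : 0 < b) : BijOn (mobiusSwap b) (Icc 0 1) (Icc 0 1) := by
  have hinv : ∀ x ∈ Icc (0 : ℝ) 1, mobiusSwap b (mobiusSwap b x) = x := fun x hx =>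
    mobiusSwap_mobiusSwap hb.ne' (by linarith) (by linarith [hx.1])
  exact InvOn.bijOn ⟨hinv, hinv⟩ (mapsTo_mobiusSwap_Icc hb) (mapsTo_mobiusSwap_Icc hb)

lemma hasDerivAt_mobiusSwap (hbx : b + x ≠ 0) :
    HasDerivAt (mobiusSwap b) (-(b * (b + 1) / (b + x) ^ 2)) x := by
  have h := (((hasDerivAt_id x).const_sub 1).const_mul b).div ((hasDerivAt_id x).const_add b) hbx
  refine h.congr_deriv ?_
  simp only [id]
  field_simp
  ring

lemma integrand_mobiusSwap_mul_deriv (a : ℝ) (n : ℕ) (hb : b ≠ 0) (hb1 : b + 1 ≠ 0)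
    (hbx : b + x ≠ 0) :
    (mobiusSwap b x) ^ n * (1 - mobiusSwap b x) ^ n
        / ((a - b) * mobiusSwap b x + (a + 1) * b) ^ (n + 1) * (b * (b + 1) / (b + x) ^ 2)
      = x ^ n * (1 - x) ^ n / ((x + a) * (x + b)) ^ (n + 1) := by
  have hden : (a - b) * mobiusSwap b x + (a + 1) * b = b * (b + 1) * (x + a) / (b + x) := by
    rw [mobiusSwap]; field_simp; ring
  rw [hden, one_sub_mobiusSwap hbx, mobiusSwap]
  rcases eq_or_ne (x + a) 0 with hxa | hxa
  · -- both sides divide by `0 ^ (n + 1) = 0`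
    simp [hxa]
  have hxb : x + b ≠ 0 := by rwa [add_comm]
  simp only [mul_pow, div_pow]
  field_simp
  ring

lemma integral_comp_mobiusSwap_mul (hb : 0 < b) {g : ℝ → ℝ} (hg : ContinuousOn g (Icc 0 1)) :
    ∫ x in (0 : ℝ)..1, g (mobiusSwap b x) * (b * (b + 1) / (b + x) ^ 2)
      = ∫ u in (0 : ℝ)..1, g u := by
  have hIcc : uIcc (0 : ℝ) 1 = Icc 0 1 := uIcc_of_le zero_le_one
  have hbx : ∀ x ∈ uIcc (0 : ℝ) 1, b + x ≠ 0 := fun x hx => by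
    rw [hIcc] at hx; linarith [hx.1]
  have hsubst := integral_comp_mul_deriv' (f := mobiusSwap b) (g := g)
    (fun x hx => hasDerivAt_mobiusSwap (hbx x hx))
    (ContinuousOn.neg <| ContinuousOn.div (by fun_prop) (by fun_prop)
      fun x hx => pow_ne_zero _ (hbx x hx))
    (hg.mono (by rw [hIcc]; exact (mapsTo_mobiusSwap_Icc hb).image_subset))
  rw [mobiusSwap_zero hb.ne', mobiusSwap_one] at hsubst
  have h : ∫ x in (0 : ℝ)..1, g (mobiusSwap b x) * -(b * (b + 1) / (b + x) ^ 2)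
      = -∫ u in (0 : ℝ)..1, g u := by
    rw [← integral_symm]; exact hsubst
  simpa only [mul_neg, integral_neg, neg_inj] using h

end

theorem stmt8 (a b : ℝ) (hb : 0 < b) (hab : b < a) (n : ℕ)
    (f : ℝ → ℝ) (hf : ∀ x, f x = b * (1 - x) / (b + x)) :
    Set.BijOn f (Set.Icc (0:ℝ) 1) (Set.Icc (0:ℝ) 1) ∧
    (∀ x ∈ Set.Icc (0:ℝ) 1, DifferentiableAt ℝ f x) ∧
    f 0 = 1 ∧ f 1 = 0 ∧
    (∀ x ∈ Set.Icc (0:ℝ) 1,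
      (f x) ^ n * (1 - f x) ^ n / ((a - b) * f x + (a + 1) * b) ^ (n + 1)
          * (b * (b + 1) / (b + x) ^ 2)
        = x ^ n * (1 - x) ^ n / ((x + a) * (x + b)) ^ (n + 1)) ∧
    (∫ x in (0:ℝ)..1, x ^ n * (1 - x) ^ n / ((x + a) * (x + b)) ^ (n + 1)
      = ∫ u in (0:ℝ)..1, u ^ n * (1 - u) ^ n / ((a - b) * u + (a + 1) * b) ^ (n + 1)) := by
  obtain rfl : f = mobiusSwap b := funext hf
  have hbx : ∀ x ∈ Icc (0 : ℝ) 1, b + x ≠ 0 := fun x hx => by linarith [hx.1]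
  have hpt : ∀ x ∈ Icc (0 : ℝ) 1, _ := fun x hx =>
    integrand_mobiusSwap_mul_deriv a n hb.ne' (by linarith) (hbx x hx)
  refine ⟨bijOn_mobiusSwap_Icc hb,
    fun x hx => (hasDerivAt_mobiusSwap (hbx x hx)).differentiableAt,
    mobiusSwap_zero hb.ne', mobiusSwap_one, hpt, ?_⟩
  have hden : ∀ u ∈ Icc (0 : ℝ) 1, (a - b) * u + (a + 1) * b ≠ 0 := fun u hu => by
    nlinarith [hu.1, hu.2]
  rw [← integral_comp_mobiusSwap_mul
    (g := fun u => u ^ n * (1 - u) ^ n / ((a - b) * u + (a + 1) * b) ^ (n + 1)) hb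
    (ContinuousOn.div (by fun_prop) (by fun_prop) fun u hu => pow_ne_zero _ (hden u hu))]
  refine integral_congr fun x hx => (hpt x ?_).symm
  rwa [uIcc_of_le zero_le_one] at hx
end

section
/- For real a > b > 0, let u = b(1-x)/(b+x); then the rational function identity u^n(1-u)^n/((a-b)u+(a+1)b)^(n+1) * |du/dx| = x^n(1-x)^n/((x+a)(x+b))^(n+1) holds for all x in (0,1). -/
theorem stmt10 (a b : ℝ) (hb : 0 < b) (hab : b < a) (n : ℕ)
    (x : ℝ) (hx : x ∈ Set.Ioo (0:ℝ) 1) (u : ℝ) (hu : u = b * (1 - x) / (b + x)) :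
    u ^ n * (1 - u) ^ n / ((a - b) * u + (a + 1) * b) ^ (n + 1)
        * |(-(b * (b + 1)) / (b + x) ^ 2)|
      = x ^ n * (1 - x) ^ n / ((x + a) * (x + b)) ^ (n + 1) := by
  obtain ⟨hx0, hx1⟩ := hx
  have hbx : 0 < b + x := by linarith
  have hbx' : (b + x) ≠ 0 := ne_of_gt hbx
  have hax : (0:ℝ) < a + x := by linarith
  have hxa : (0:ℝ) < x + a := by linarith
  have hxb : (0:ℝ) < x + b := by linarith
  have h1u : 1 - u = x * (b + 1) / (b + x) := by
    rw [hu]; field_simp; ring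
  have hD : (a - b) * u + (a + 1) * b = b * (b + 1) * (a + x) / (b + x) := by
    rw [hu]; field_simp; ring
  set D : ℝ := (a - b) * u + (a + 1) * b with hDdef
  have hDpos : 0 < D := by rw [hD]; positivity
  have hD' : D ≠ 0 := ne_of_gt hDpos
  have habs : |(-(b * (b + 1)) / (b + x) ^ 2)| = b * (b + 1) / (b + x) ^ 2 := by
    rw [abs_div, abs_neg, abs_of_pos (by positivity), abs_of_pos (by positivity)]
  have hA : u * (1 - u) / D = x * (1 - x) / ((x + a) * (x + b)) := by
    rw [h1u, hD, hu]
    field_simp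
    ring
  have hc : b * (b + 1) / ((b + x) ^ 2 * D) = 1 / ((x + a) * (x + b)) := by
    rw [hD]
    rw [div_eq_div_iff (by positivity) (by positivity)]
    field_simp
    ring
  have hsplit : u ^ n * (1 - u) ^ n / D ^ (n + 1) * (b * (b + 1) / (b + x) ^ 2)
      = (u * (1 - u) / D) ^ n * (b * (b + 1) / ((b + x) ^ 2 * D)) := by
    rw [div_pow, mul_pow, pow_succ, div_mul_div_comm, div_mul_div_comm]
    congr 1
    ring
  rw [habs, hsplit, hA, hc, div_pow, mul_pow, div_mul_div_comm, mul_one, ← pow_succ]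
end
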